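/- Suppose a, b : ℕ → ℝ are nonnegative, a(k) = (1/2)^(2^k − 1), and b satisfies b(0) ≤ 1 and b(k+1) ≤ 4·(a(k)·u₀)/ψ(2u₀) · b(k) with ψ(u)=1−4u+2u², u₀ = (16−√232)/16. Then b(k) ≤ a(k) for all k. -/

import Mathlib

/-! Since `a (k+1) = a k ^ 2 / 2`, the bound propagates: `b (k+1) ≤ c · a k · b k ≤ c · a k ^ 2`,
which is at most `a (k+1)` as soon as the contraction constant `c = 4u₀/ψ(2u₀)` is at most `1/2`.
That holds because `u₀` is a root of `32u² − 64u + 3`, which turns `ψ(2u₀)` into `1/4 + 8u₀`. -/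

noncomputable def psi (u : ℝ) : ℝ := 1 - 4 * u + 2 * u ^ 2

noncomputable def u₀ : ℝ := (16 - Real.sqrt 232) / 16

theorem pow_two_pow_succ_sub_one (x : ℝ) (k : ℕ) :
    x ^ (2 ^ (k + 1) - 1) = x * (x ^ (2 ^ k - 1)) ^ 2 := by
  have hexp : 2 ^ (k + 1) - 1 = 1 + (2 ^ k - 1) * 2 := by
    have : 1 ≤ 2 ^ k := Nat.one_le_two_pow
    omega
  rw [hexp, pow_add, pow_one, pow_mul]

theorem le_pow_two_pow_sub_one_of_le_mul {b : ℕ → ℝ} {x c : ℝ} (hc₀ : 0 ≤ c) (hcx : c ≤ x)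
    (hb0 : b 0 ≤ 1) (hstep : ∀ k, b (k + 1) ≤ c * x ^ (2 ^ k - 1) * b k) :
    ∀ k, b k ≤ x ^ (2 ^ k - 1)
  | 0 => by simpa using hb0
  | k + 1 => by
    have ih := le_pow_two_pow_sub_one_of_le_mul hc₀ hcx hb0 hstep k
    calc b (k + 1) ≤ c * x ^ (2 ^ k - 1) * b k := hstep k
      _ ≤ c * x ^ (2 ^ k - 1) * x ^ (2 ^ k - 1) := by
        have : 0 ≤ x := hc₀.trans hcx
        gcongr
      _ = c * (x ^ (2 ^ k - 1)) ^ 2 := by ring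
      _ ≤ x * (x ^ (2 ^ k - 1)) ^ 2 := by gcongr
      _ = x ^ (2 ^ (k + 1) - 1) := (pow_two_pow_succ_sub_one x k).symm

theorem u₀_pos : 0 < u₀ := by
  have : Real.sqrt 232 < 16 := by
    rw [Real.sqrt_lt' (by norm_num)]
    norm_num
  unfold u₀
  linarith

theorem psi_two_mul_u₀ : psi (2 * u₀) = 1 / 4 + 8 * u₀ := by
  have hs : Real.sqrt 232 ^ 2 = 232 := Real.sq_sqrt (by norm_num)
  unfold psi u₀
  linear_combination hs / 32

theorem four_mul_u₀_div_psi_le : 4 * u₀ / psi (2 * u₀) ≤ 1 / 2 := by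
  have := u₀_pos
  rw [psi_two_mul_u₀, div_le_iff₀ (by positivity)]
  linarith

theorem four_mul_u₀_div_psi_nonneg : 0 ≤ 4 * u₀ / psi (2 * u₀) := by
  have := u₀_pos
  rw [psi_two_mul_u₀]
  positivity

theorem stmt_13_general (a b : ℕ → ℝ)
    (ha : ∀ k, a k = (1 / 2 : ℝ) ^ (2 ^ k - 1))
    (hb0 : b 0 ≤ 1)
    (hstep : ∀ k, b (k + 1) ≤ 4 * (a k * u₀) / psi (2 * u₀) * b k) :
    ∀ k, b k ≤ a k := by
  intro k
  rw [ha k]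
  refine le_pow_two_pow_sub_one_of_le_mul four_mul_u₀_div_psi_nonneg four_mul_u₀_div_psi_le
    hb0 (fun j => ?_) k
  calc b (j + 1) ≤ 4 * (a j * u₀) / psi (2 * u₀) * b j := hstep j
    _ = 4 * u₀ / psi (2 * u₀) * (1 / 2) ^ (2 ^ j - 1) * b j := by rw [ha j]; ring

/-- Recursive formulation of the Approximate Zero Theorem's induction:
if `a k = (1/2)^(2^k−1)`, `b` is nonnegative with `b 0 ≤ 1` and
`b (k+1) ≤ 4(a k · u₀)/ψ(2u₀) · b k`, then `b k ≤ a k` for all `k`. -/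
theorem stmt_13 (a b : ℕ → ℝ) (hb : ∀ k, 0 ≤ b k)
    (ha : ∀ k, a k = (1 / 2 : ℝ) ^ (2 ^ k - 1))
    (hb0 : b 0 ≤ 1)
    (hstep : ∀ k, b (k + 1) ≤ 4 * (a k * u₀) / psi (2 * u₀) * b k) :
    ∀ k, b k ≤ a k :=
  stmt_13_general a b ha hb0 hstep
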